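/- arXiv:2204.14174 — 3 statements merged into one kernel-verified Lean document; each statement's English description precedes it below -/
import Mathlib

section
/- If T: ℝⁿ → ℝⁿ is an averaged operator, i.e., T = (1-α)·Id + α·Q for some α ∈ (0,1) and a 1-Lipschitz map Q, and T has at least one fixed point, then for any starting point x¹ the sequence defined by x^{k+1} = T(x^k) converges to a fixed point of T. -/
/-! For a fixed point `z` of `Q`, the identity
`‖(1 - α) • a + α • b‖² = (1 - α) ‖a‖² + α ‖b‖² - α (1 - α) ‖a - b‖²` gives
`‖T x - z‖² + α (1 - α) ‖x - Q x‖² ≤ ‖x - z‖²`. So the iterates are Fejér monotone with respect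
to `Fix T = Fix Q`, and telescoping gives `xₖ - Q xₖ → 0`. In finite dimension the bounded
iterates have a cluster point, which is fixed by `Q` by continuity; Fejér monotonicity with
respect to that point turns the cluster point into a limit. -/

open Filter Topology Function

theorem norm_one_sub_smul_add_smul_sq {E : Type*} [NormedAddCommGroup E] [InnerProductSpace ℝ E]
    (a b : E) (c : ℝ) :
    ‖(1 - c) • a + c • b‖ ^ 2 = (1 - c) * ‖a‖ ^ 2 + c * ‖b‖ ^ 2 - c * (1 - c) * ‖a - b‖ ^ 2 := by
  rw [norm_add_sq_real, norm_sub_sq_real, norm_smul, norm_smul, real_inner_smul_left,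
    real_inner_smul_right, mul_pow, mul_pow, Real.norm_eq_abs, Real.norm_eq_abs, sq_abs, sq_abs]
  ring

theorem tendsto_atTop_of_antitone_dist_of_mapClusterPt {X : Type*} [PseudoMetricSpace X]
    {u : ℕ → X} {a : X} (hu : Antitone fun k => dist (u k) a) (h : MapClusterPt a atTop u) :
    Tendsto u atTop (𝓝 a) := by
  refine Metric.tendsto_atTop.2 fun ε hε => ?_
  obtain ⟨N, hN⟩ := (h.frequently (Metric.ball_mem_nhds a hε)).exists
  exact ⟨N, fun k hk => (hu hk).trans_lt hN⟩

theorem tendsto_zero_of_mul_le_sub_succ {d r : ℕ → ℝ} {c : ℝ} (hc : 0 < c) (hd : ∀ k, 0 ≤ d k)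
    (hr : ∀ k, 0 ≤ r k) (h : ∀ k, c * r k ≤ d k - d (k + 1)) : Tendsto r atTop (𝓝 0) := by
  have hanti : Antitone d := antitone_nat_of_succ_le fun k => by nlinarith [h k, hr k]
  have hlim := tendsto_atTop_ciInf hanti ⟨0, by rintro _ ⟨k, rfl⟩; exact hd k⟩
  have hdiff : Tendsto (fun k => d k - d (k + 1)) atTop (𝓝 0) := by
    simpa using hlim.sub (hlim.comp (tendsto_add_atTop_nat 1))
  have hcr : Tendsto (fun k => c * r k) atTop (𝓝 0) :=
    squeeze_zero (fun k => mul_nonneg hc.le (hr k)) h hdiff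
  simpa [hc.ne'] using hcr.const_mul c⁻¹

theorem isFixedPt_of_tendsto_sub_apply {X ι : Type*} [TopologicalSpace X] [AddCommGroup X]
    [IsTopologicalAddGroup X] [T2Space X] {Q : X → X} (hQ : Continuous Q) {l : Filter ι} [l.NeBot]
    {u : ι → X} {a : X} (hu : Tendsto u l (𝓝 a)) (hres : Tendsto (fun k => u k - Q (u k)) l (𝓝 0)) :
    IsFixedPt Q a := by
  have : Tendsto (fun k => u k - (u k - Q (u k))) l (𝓝 (a - 0)) := hu.sub hres
  simp only [sub_sub_cancel, sub_zero] at this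
  exact tendsto_nhds_unique ((hQ.tendsto a).comp hu) this

section Averaged

variable {E : Type*} [NormedAddCommGroup E] [InnerProductSpace ℝ E] {T Q : E → E} {α : ℝ}

theorem isFixedPt_iff_of_averaged (hα : α ≠ 0) (hT : ∀ x, T x = (1 - α) • x + α • Q x) {z : E} :
    IsFixedPt T z ↔ IsFixedPt Q z := by
  have : T z - z = α • (Q z - z) := by rw [hT]; module
  rw [IsFixedPt, IsFixedPt, ← sub_eq_zero, this, smul_eq_zero, sub_eq_zero, or_iff_right hα]

theorem norm_sub_sq_add_le_of_averaged (hα : α ∈ Set.Icc (0 : ℝ) 1) (hQ : LipschitzWith 1 Q)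
    (hT : ∀ x, T x = (1 - α) • x + α • Q x) {z : E} (hz : IsFixedPt Q z) (x : E) :
    ‖T x - z‖ ^ 2 + α * (1 - α) * ‖x - Q x‖ ^ 2 ≤ ‖x - z‖ ^ 2 := by
  have hQx : ‖Q x - z‖ ≤ ‖x - z‖ := by
    simpa [hz.eq, dist_eq_norm] using hQ.dist_le_mul x z
  have hTx : T x - z = (1 - α) • (x - z) + α • (Q x - z) := by rw [hT]; module
  have hsq : α * ‖Q x - z‖ ^ 2 ≤ α * ‖x - z‖ ^ 2 :=
    mul_le_mul_of_nonneg_left (pow_le_pow_left₀ (norm_nonneg _) hQx 2) hα.1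
  rw [hTx, norm_one_sub_smul_add_smul_sq, sub_sub_sub_cancel_right]
  linarith

theorem antitone_dist_iterate_of_averaged (hα : α ∈ Set.Icc (0 : ℝ) 1) (hQ : LipschitzWith 1 Q)
    (hT : ∀ x, T x = (1 - α) • x + α • Q x) {z : E} (hz : IsFixedPt Q z) (x : E) :
    Antitone fun k => dist (T^[k] x) z := by
  refine antitone_nat_of_succ_le fun k => ?_
  have key := norm_sub_sq_add_le_of_averaged hα hQ hT hz (T^[k] x)
  have : 0 ≤ α * (1 - α) * ‖T^[k] x - Q (T^[k] x)‖ ^ 2 :=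
    mul_nonneg (mul_nonneg hα.1 (sub_nonneg.2 hα.2)) (sq_nonneg _)
  rw [dist_eq_norm, dist_eq_norm, iterate_succ_apply']
  exact pow_le_pow_iff_left₀ (norm_nonneg _) (norm_nonneg _) two_ne_zero |>.1 (by linarith)

theorem tendsto_iterate_sub_apply_of_averaged (hα : α ∈ Set.Ioo (0 : ℝ) 1)
    (hQ : LipschitzWith 1 Q) (hT : ∀ x, T x = (1 - α) • x + α • Q x) {z : E}
    (hz : IsFixedPt Q z) (x : E) :
    Tendsto (fun k => T^[k] x - Q (T^[k] x)) atTop (𝓝 0) := by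
  have hsq : Tendsto (fun k => ‖T^[k] x - Q (T^[k] x)‖ ^ 2) atTop (𝓝 0) := by
    refine tendsto_zero_of_mul_le_sub_succ (mul_pos hα.1 (sub_pos.2 hα.2))
      (d := fun k => ‖T^[k] x - z‖ ^ 2) (fun _ => sq_nonneg _) (fun _ => sq_nonneg _) fun k => ?_
    have := norm_sub_sq_add_le_of_averaged (Set.Ioo_subset_Icc_self hα) hQ hT hz (T^[k] x)
    rw [iterate_succ_apply']
    linarith
  rw [tendsto_zero_iff_norm_tendsto_zero]
  simpa using hsq.sqrt

end Averaged

/-- Krasnosel'skii–Mann: if `T = (1-α)•Id + α•Q` is averaged (with `α ∈ (0,1)` and `Q`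
nonexpansive) and `T` has a fixed point, then for any start `x¹` the Picard iterates
`x^{k+1} = T(x^k)` converge to a fixed point of `T`. -/
theorem averaged_operator_iterates_tendsto_fixedPoint
    (n : ℕ) (T Q : EuclideanSpace ℝ (Fin n) → EuclideanSpace ℝ (Fin n))
    (α : ℝ) (hα : α ∈ Set.Ioo (0 : ℝ) 1)
    (hQ : LipschitzWith 1 Q)
    (hT : ∀ x, T x = (1 - α) • x + α • Q x)
    (hfix : ∃ z, T z = z)
    (x1 : EuclideanSpace ℝ (Fin n)) :
    ∃ xstar, T xstar = xstar ∧
      Filter.Tendsto (fun k => T^[k] x1) Filter.atTop (nhds xstar) := by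
  have hα' : α ∈ Set.Icc (0 : ℝ) 1 := Set.Ioo_subset_Icc_self hα
  have hfixed {z} : IsFixedPt T z ↔ IsFixedPt Q z := isFixedPt_iff_of_averaged hα.1.ne' hT
  obtain ⟨z, hz⟩ := hfix
  have hbdd (k : ℕ) : T^[k] x1 ∈ Metric.closedBall z (dist x1 z) := by
    simpa using antitone_dist_iterate_of_averaged hα' hQ hT (hfixed.1 hz) x1 (Nat.zero_le k)
  obtain ⟨xstar, -, φ, hφ, hlim⟩ := tendsto_subseq_of_bounded Metric.isBounded_closedBall hbdd
  have hxstar : IsFixedPt Q xstar := isFixedPt_of_tendsto_sub_apply hQ.continuous hlim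
    ((tendsto_iterate_sub_apply_of_averaged hα hQ hT (hfixed.1 hz) x1).comp hφ.tendsto_atTop)
  exact ⟨xstar, hfixed.2 hxstar, tendsto_atTop_of_antitone_dist_of_mapClusterPt
    (antitone_dist_iterate_of_averaged hα' hQ hT hxstar x1)
    (hlim.mapClusterPt.of_comp hφ.tendsto_atTop)⟩
end

section
/- Let d > 0 and let (v*, z*) ∈ ℝ² with z* > ln(v* + d) (i.e., the point lies strictly outside the set P = {(v, z) : z ≤ ln(v + d)}). If (v̄, z̄) is the projection of (v*, z*) onto P, then z̄ = ln(v̄ + d) and the optimality condition z̄ - z* = -(v̄ + d)(v̄ - v*) holds. -/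
/-!
The nearest point `(v̄, z̄)` minimises the squared distance to `(v*, z*)` along every curve through
it that stays in the hypograph, so the derivative along such a curve vanishes. If `(v̄, z̄)` were
below the graph, the horizontal and vertical lines through it would give `v̄ = v*` and `z̄ = z*`,
putting the outside point inside. On the graph, the graph itself is such a curve, and its
vanishing derivative `(v̄ - v*) + (z̄ - z*) / (v̄ + d) = 0` is the normal condition.
-/

open Real Filter Topology

theorem IsLocalMin.sub_add_sub_mul_deriv_eq_zero {f : ℝ → ℝ} {f' a b x : ℝ}
    (hmin : IsLocalMin (fun y => (y - a) ^ 2 + (f y - b) ^ 2) x) (hf : HasDerivAt f f' x) :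
    x - a + (f x - b) * f' = 0 := by
  have h := hmin.hasDerivAt_eq_zero
    ((((hasDerivAt_id x).sub_const a).pow 2).add ((hf.sub_const b).pow 2))
  norm_num at h
  linarith

theorem eventually_pos_and_le_log_add {d v₀ z₀ : ℝ} (hv₀ : 0 < v₀ + d) (hz₀ : z₀ < log (v₀ + d)) :
    ∀ᶠ v in 𝓝 v₀, 0 < v + d ∧ z₀ ≤ log (v + d) := by
  have hshift : ContinuousAt (fun v => v + d) v₀ := continuousAt_id.add continuousAt_const
  filter_upwards [continuousAt_const.eventually_lt hshift hv₀,
    continuousAt_const.eventually_lt (hshift.log hv₀.ne') hz₀]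
    with v hpos hlt
  exact ⟨hpos, hlt.le⟩

theorem eq_log_add_of_isNearest {d vs zs vb zb : ℝ} (hout : log (vs + d) < zs)
    (hvb : 0 < vb + d) (hzb : zb ≤ log (vb + d))
    (hproj : ∀ v z : ℝ, 0 < v + d → z ≤ log (v + d) →
        (vb - vs) ^ 2 + (zb - zs) ^ 2 ≤ (v - vs) ^ 2 + (z - zs) ^ 2) :
    zb = log (vb + d) := by
  by_contra hne
  have hlt : zb < log (vb + d) := hzb.lt_of_ne hne
  have hz : zb = zs := by
    have hmin : IsLocalMin (fun z => (z - zs) ^ 2 + ((fun _ => vb) z - vs) ^ 2) zb := by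
      filter_upwards [Iio_mem_nhds hlt] with z hz
      linarith [hproj vb z hvb (le_of_lt hz)]
    simpa [sub_eq_zero] using hmin.sub_add_sub_mul_deriv_eq_zero (hasDerivAt_const zb vb)
  have hv : vb = vs := by
    have hmin : IsLocalMin (fun v => (v - vs) ^ 2 + ((fun _ => zb) v - zs) ^ 2) vb := by
      filter_upwards [eventually_pos_and_le_log_add hvb hlt] with v ⟨hpos, hle⟩
      linarith [hproj v zb hpos hle]
    simpa [sub_eq_zero] using hmin.sub_add_sub_mul_deriv_eq_zero (hasDerivAt_const vb zb)
  rw [hv, hz] at hlt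
  exact hout.not_gt hlt

theorem sub_eq_neg_mul_of_isNearest_log_add {d vs zs vb : ℝ} (hvb : 0 < vb + d)
    (hproj : ∀ v z : ℝ, 0 < v + d → z ≤ log (v + d) →
        (vb - vs) ^ 2 + (log (vb + d) - zs) ^ 2 ≤ (v - vs) ^ 2 + (z - zs) ^ 2) :
    log (vb + d) - zs = -((vb + d) * (vb - vs)) := by
  have hmin : IsLocalMin (fun v => (v - vs) ^ 2 + (log (v + d) - zs) ^ 2) vb := by
    filter_upwards [eventually_pos_and_le_log_add hvb (sub_one_lt (log (vb + d)))]
      with v ⟨hpos, _⟩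
    exact hproj v _ hpos le_rfl
  have hderiv : HasDerivAt (fun v => log (v + d)) (vb + d)⁻¹ vb := by
    simpa using ((hasDerivAt_id vb).add_const d).log hvb.ne'
  have hnormal := hmin.sub_add_sub_mul_deriv_eq_zero hderiv
  field_simp at hnormal
  linarith

theorem log_hypograph_projection_optimality_general
    (d vs zs vb zb : ℝ)
    (hout : Real.log (vs + d) < zs)
    (hmem : 0 < vb + d ∧ zb ≤ Real.log (vb + d))
    (hproj : ∀ v z : ℝ, 0 < v + d → z ≤ Real.log (v + d) →
        (vb - vs) ^ 2 + (zb - zs) ^ 2 ≤ (v - vs) ^ 2 + (z - zs) ^ 2) :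
    zb = Real.log (vb + d) ∧ zb - zs = -((vb + d) * (vb - vs)) := by
  obtain ⟨hvb, hzb⟩ := hmem
  have hcurve : zb = log (vb + d) := eq_log_add_of_isNearest hout hvb hzb hproj
  subst hcurve
  exact ⟨rfl, sub_eq_neg_mul_of_isNearest_log_add hvb hproj⟩

/-- Characterization of the Euclidean projection onto `P = {(v, z) : z ≤ ln(v + d)}`
for a point strictly outside the set: the projection `(v̄, z̄)` lies on the curve
`z̄ = ln(v̄ + d)` and satisfies the normal-line optimality condition
`z̄ - z* = -(v̄ + d)(v̄ - v*)`. -/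
theorem log_hypograph_projection_optimality
    (d vs zs vb zb : ℝ) (hd : 0 < d)
    (hout : Real.log (vs + d) < zs)
    (hmem : 0 < vb + d ∧ zb ≤ Real.log (vb + d))
    (hproj : ∀ v z : ℝ, 0 < v + d → z ≤ Real.log (v + d) →
        (vb - vs) ^ 2 + (zb - zs) ^ 2 ≤ (v - vs) ^ 2 + (z - zs) ^ 2) :
    zb = Real.log (vb + d) ∧ zb - zs = -((vb + d) * (vb - vs)) :=
  log_hypograph_projection_optimality_general d vs zs vb zb hout hmem hproj
end

section
/- Let f: ℝⁿ → ℝ be convex and L-Lipschitz differentiable, and let g, h: ℝⁿ → ℝ ∪ {∞} be proper closed convex functions. If ξ* minimizes f + g + h and the Davis–Yin operator is defined with step size α ∈ (0, 2/L) by ξ = prox_{αf}(ζ), ψ = prox_{αg}(2ξ - ζ - α∇h(ξ)), T(ζ) = ζ + ψ - ξ, then any fixed point ζ* of T satisfies: ξ* := prox_{αf}(ζ*) is a minimizer of f + g + h. -/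
/-!
With `y = 2ξ - ζ* - α∇h(ξ)`, the fixed-point equation says that the second prox step also
returns `ξ`. Optimality of the two prox steps gives the subgradients `ζ* - ξ ∈ α∂f(ξ)` and
`y - ξ ∈ α∂g(ξ)`, which add up to `-α∇h(ξ)`. Hence `0 ∈ ∂f(ξ) + ∂g(ξ) + ∇h(ξ)`: summing the
subgradient inequalities of `f`, `g` and the gradient inequality of `h` gives minimality of `ξ`.
-/

open Set

/-- `p` is the proximal point `prox_φ(x)` of an extended-real-valued function `φ` at `x`,
i.e. `p` minimizes `z ↦ φ(z) + (1/2)‖z - x‖²`. -/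
def IsProximalPt {n : ℕ} (φ : EuclideanSpace ℝ (Fin n) → EReal)
    (x p : EuclideanSpace ℝ (Fin n)) : Prop :=
  ∀ z, φ p + (((1 : ℝ) / 2 * ‖p - x‖ ^ 2 : ℝ) : EReal) ≤
    φ z + (((1 : ℝ) / 2 * ‖z - x‖ ^ 2 : ℝ) : EReal)

/-- Convexity for an extended-real-valued function on ℝⁿ. -/
def ERealConvex {n : ℕ} (φ : EuclideanSpace ℝ (Fin n) → EReal) : Prop :=
  ∀ x y : EuclideanSpace ℝ (Fin n), ∀ t : ℝ, t ∈ Icc (0 : ℝ) 1 →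
    φ (t • x + (1 - t) • y) ≤ ((t : ℝ) : EReal) * φ x + (((1 - t : ℝ)) : EReal) * φ y

open Filter Topology
open scoped RealInnerProductSpace

theorem ConvexOn.inner_gradient_le_sub {F : Type*} [NormedAddCommGroup F]
    [InnerProductSpace ℝ F] [CompleteSpace F] {s : Set F} {h : F → ℝ} {x y g : F}
    (hconv : ConvexOn ℝ s h) (hx : x ∈ s) (hy : y ∈ s) (hg : HasGradientAt h g x) :
    ⟪g, y - x⟫ ≤ h y - h x := by
  let ℓ : ℝ →ᵃ[ℝ] F := AffineMap.lineMap x y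
  have hline : HasDerivAt (h ∘ ℓ) ⟪g, y - x⟫ 0 := by
    have hg' := hg.hasFDerivAt
    rw [← AffineMap.lineMap_apply_zero (k := ℝ) x y] at hg'
    simpa using hg'.comp_hasDerivAt (0 : ℝ) (AffineMap.hasDerivAt_lineMap (a := x) (b := y))
  have := (hconv.comp_affineMap ℓ).le_slope_of_hasDerivAt
    (by simpa [ℓ] using hx) (by simpa [ℓ] using hy) one_pos hline
  simpa [slope_def_field, ℓ] using this

theorem le_of_forall_mem_Ioc_le_add_mul {a b c : ℝ}
    (h : ∀ t ∈ Ioc (0 : ℝ) 1, a ≤ b + t * c) : a ≤ b := by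
  have hlim : Tendsto (fun t : ℝ => b + t * c) (𝓝[>] 0) (𝓝 b) := by
    have : Tendsto (fun t : ℝ => b + t * c) (𝓝 0) (𝓝 (b + 0 * c)) :=
      tendsto_const_nhds.add (tendsto_id.mul_const c)
    simpa using this.mono_left nhdsWithin_le_nhds
  refine ge_of_tendsto hlim ?_
  filter_upwards [Ioc_mem_nhdsGT (zero_lt_one' ℝ)] with t ht using h t ht

section Proximal

variable {n : ℕ} {x p z : EuclideanSpace ℝ (Fin n)}

theorem IsProximalPt.add_half_sq_le {φ : EuclideanSpace ℝ (Fin n) → EReal}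
    (hp : IsProximalPt φ x p) {a b : ℝ} (ha : φ p = a) (hb : φ z ≤ b) :
    a + 1 / 2 * ‖p - x‖ ^ 2 ≤ b + 1 / 2 * ‖z - x‖ ^ 2 := by
  have := (ha ▸ hp z).trans (add_le_add_left hb _)
  exact_mod_cast this

theorem ERealConvex.le_coe {f : EuclideanSpace ℝ (Fin n) → EReal} (hf : ERealConvex f)
    {a b t : ℝ} (ha : f x = a) (hb : f z = b) (ht : t ∈ Icc (0 : ℝ) 1) :
    f (t • x + (1 - t) • z) ≤ ((t * a + (1 - t) * b : ℝ) : EReal) := by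
  simpa [ha, hb] using hf x z t ht

variable {f : EuclideanSpace ℝ (Fin n) → EReal} {α : ℝ}

theorem IsProximalPt.ne_top (hα : 0 < α) (hp : IsProximalPt (fun z => (α : EReal) * f z) x p)
    {b : ℝ} (hb : f z = b) : f p ≠ ⊤ := by
  intro htop
  have : (α : EReal) * f p + _ ≤ α * f z + _ := hp z
  rw [htop, hb, EReal.coe_mul_top_of_pos hα, EReal.top_add_of_ne_bot (EReal.coe_ne_bot _),
    ← EReal.coe_mul, ← EReal.coe_add, top_le_iff] at this
  exact EReal.coe_ne_top _ this

theorem IsProximalPt.inner_sub_le (hf : ERealConvex f) (hα : 0 < α)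
    (hp : IsProximalPt (fun z => (α : EReal) * f z) x p) {a b : ℝ} (ha : f p = a)
    (hb : f z = b) : ⟪x - p, z - p⟫ ≤ α * (b - a) := by
  refine le_of_forall_mem_Ioc_le_add_mul (c := ‖z - p‖ ^ 2 / 2) fun t ht => ?_
  have hconv := hf.le_coe hb ha (Ioc_subset_Icc_self ht)
  have hprox := hp.add_half_sq_le (a := α * a) (b := α * (t * b + (1 - t) * a)) (by simp [ha])
    (by rw [EReal.coe_mul]; exact mul_le_mul_of_nonneg_left hconv (by simpa using hα.le))
  have hnorm : ‖t • z + (1 - t) • p - x‖ ^ 2 =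
      t ^ 2 * ‖z - p‖ ^ 2 - 2 * t * ⟪z - p, x - p⟫ + ‖x - p‖ ^ 2 := by
    rw [show t • z + (1 - t) • p - x = t • (z - p) - (x - p) by module, norm_sub_sq_real,
      norm_smul, real_inner_smul_left, Real.norm_of_nonneg ht.1.le]
    ring
  rw [hnorm, norm_sub_rev p x, real_inner_comm] at hprox
  refine le_of_mul_le_mul_left ?_ ht.1
  nlinarith

end Proximal

theorem davis_yin_fixedPoint_minimizer_general
    (n : ℕ) (f g : EuclideanSpace ℝ (Fin n) → EReal)
    (h : EuclideanSpace ℝ (Fin n) → ℝ)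
    (h' : EuclideanSpace ℝ (Fin n) → EuclideanSpace ℝ (Fin n))
    (L : NNReal)
    (hf_conv : ERealConvex f)
    (hf_ne_bot : ∀ x, f x ≠ ⊥)
    (hg_conv : ERealConvex g)
    (hg_ne_bot : ∀ x, g x ≠ ⊥)
    (hh_conv : ConvexOn ℝ univ h)
    (hh_diff : ∀ x, HasGradientAt h (h' x) x)
    (α : ℝ) (hα : α ∈ Ioo (0 : ℝ) (2 / L))
    (proxf proxg : EuclideanSpace ℝ (Fin n) → EuclideanSpace ℝ (Fin n))
    (hproxf : ∀ x, IsProximalPt (fun z => ((α : ℝ) : EReal) * f z) x (proxf x))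
    (hproxg : ∀ x, IsProximalPt (fun z => ((α : ℝ) : EReal) * g z) x (proxg x))
    (ζstar : EuclideanSpace ℝ (Fin n))
    (hfix : ζstar + proxg (2 • proxf ζstar - ζstar - α • h' (proxf ζstar)) - proxf ζstar
        = ζstar) :
    ∀ z, f (proxf ζstar) + g (proxf ζstar) + ((h (proxf ζstar) : ℝ) : EReal) ≤
      f z + g z + ((h z : ℝ) : EReal) := by
  intro z
  set ξ := proxf ζstar
  set y := 2 • ξ - ζstar - α • h' ξ
  have hpf : IsProximalPt (fun z => (α : EReal) * f z) ζstar ξ := hproxf ζstar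
  have hpg : IsProximalPt (fun z => (α : EReal) * g z) y ξ := by
    rw [add_sub_assoc, add_eq_left, sub_eq_zero] at hfix
    exact hfix ▸ hproxg y
  rcases eq_or_ne (f z) ⊤ with hfz | hfz
  · simp [hfz, EReal.top_add_of_ne_bot, hg_ne_bot z]
  rcases eq_or_ne (g z) ⊤ with hgz | hgz
  · simp [hgz, EReal.add_top_of_ne_bot, hf_ne_bot z]
  lift f z to ℝ using ⟨hfz, hf_ne_bot z⟩ with bf hbf
  lift g z to ℝ using ⟨hgz, hg_ne_bot z⟩ with bg hbg
  lift f ξ to ℝ using ⟨hpf.ne_top hα.1 hbf.symm, hf_ne_bot ξ⟩ with af haf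
  lift g ξ to ℝ using ⟨hpg.ne_top hα.1 hbg.symm, hg_ne_bot ξ⟩ with ag hag
  have hf_sub := hpf.inner_sub_le hf_conv hα.1 haf.symm hbf.symm
  have hg_sub := hpg.inner_sub_le hg_conv hα.1 hag.symm hbg.symm
  have hh_sub := hh_conv.inner_gradient_le_sub (mem_univ ξ) (mem_univ z) (hh_diff ξ)
  have hsum : ⟪ζstar - ξ, z - ξ⟫ + ⟪y - ξ, z - ξ⟫ = -(α * ⟪h' ξ, z - ξ⟫) := by
    rw [← inner_add_left, ← real_inner_smul_left, ← inner_neg_left]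
    congr 1
    simp only [y, two_nsmul]
    abel
  have : af + ag + h ξ ≤ bf + bg + h z := by
    refine le_of_mul_le_mul_left ?_ hα.1
    linarith [mul_le_mul_of_nonneg_left hh_sub hα.1.le]
  exact_mod_cast this

/-- Fixed points of the Davis–Yin operator recover minimizers: with `h` smooth convex with
`L`-Lipschitz gradient, `f, g` proper closed convex (extended-real-valued), step size
`α ∈ (0, 2/L)`, and Davis–Yin updates `ξ = prox_{αf}(ζ)`,
`ψ = prox_{αg}(2ξ - ζ - α∇h(ξ))`, `T(ζ) = ζ + ψ - ξ`, if the sum `f + g + h` has a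
minimizer, then for any fixed point `ζ*` of `T`, the point `ξ* = prox_{αf}(ζ*)`
minimizes `f + g + h`. -/
theorem davis_yin_fixedPoint_minimizer
    (n : ℕ) (f g : EuclideanSpace ℝ (Fin n) → EReal)
    (h : EuclideanSpace ℝ (Fin n) → ℝ)
    (h' : EuclideanSpace ℝ (Fin n) → EuclideanSpace ℝ (Fin n))
    (L : NNReal) (hLpos : 0 < L)
    (hf_conv : ERealConvex f) (hf_lsc : LowerSemicontinuous f)
    (hf_ne_bot : ∀ x, f x ≠ ⊥) (hf_proper : ∃ x, f x ≠ ⊤)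
    (hg_conv : ERealConvex g) (hg_lsc : LowerSemicontinuous g)
    (hg_ne_bot : ∀ x, g x ≠ ⊥) (hg_proper : ∃ x, g x ≠ ⊤)
    (hh_conv : ConvexOn ℝ univ h)
    (hh_diff : ∀ x, HasGradientAt h (h' x) x)
    (hh_lip : LipschitzWith L h')
    (α : ℝ) (hα : α ∈ Ioo (0 : ℝ) (2 / L))
    (proxf proxg : EuclideanSpace ℝ (Fin n) → EuclideanSpace ℝ (Fin n))
    (hproxf : ∀ x, IsProximalPt (fun z => ((α : ℝ) : EReal) * f z) x (proxf x))
    (hproxg : ∀ x, IsProximalPt (fun z => ((α : ℝ) : EReal) * g z) x (proxg x))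
    (hmin : ∃ ξstar, ∀ z, f ξstar + g ξstar + ((h ξstar : ℝ) : EReal) ≤
        f z + g z + ((h z : ℝ) : EReal))
    (ζstar : EuclideanSpace ℝ (Fin n))
    (hfix : ζstar + proxg (2 • proxf ζstar - ζstar - α • h' (proxf ζstar)) - proxf ζstar
        = ζstar) :
    ∀ z, f (proxf ζstar) + g (proxf ζstar) + ((h (proxf ζstar) : ℝ) : EReal) ≤
      f z + g z + ((h z : ℝ) : EReal) :=
  davis_yin_fixedPoint_minimizer_general n f g h h' L hf_conv hf_ne_bot hg_conv hg_ne_bot hh_conv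
    hh_diff α hα proxf proxg hproxf hproxg ζstar hfix
end
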